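/- Let W ∈ ℝ^{n×m} define a gauged RBM (the all-ones configuration (𝟙,𝟙) minimizes E_W) with ground state energy E0 = −∑_{i,j} W_{ij}. Among all mode-informed updates W'_{ij} = W_{ij} − γ with γ ∈ ℝ, the variance of the energies under the uniform distribution on configurations is minimized at the learning rate γ* = −E0/(nm): for every γ, Var(E_{W−γ}) ≥ Var(E_{W−γ*}), and the maximal decrease in variance equals Var(E_W) − Var(E_{W−γ*}) = E0²/(nm). -/

import Mathlib

open Finset

/-- The energy of an unbiased `(n,m)`-RBM with weights `W` at a `±1`
configuration encoded by Booleans (`true ↦ +1`, `false ↦ −1`). -/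
noncomputable def rbmEnergyB (n m : ℕ) (W : Fin n → Fin m → ℝ)
    (s : (Fin n → Bool) × (Fin m → Bool)) : ℝ :=
  -(∑ i : Fin n, ∑ j : Fin m,
      W i j * (if s.1 i then (1 : ℝ) else -1) * (if s.2 j then (1 : ℝ) else -1))

/-- Variance of a function on the configuration space, with respect to the
uniform probability measure on the `2^(n+m)` configurations. -/
noncomputable def uniformVariance (n m : ℕ)
    (f : (Fin n → Bool) × (Fin m → Bool) → ℝ) : ℝ :=
  (∑ s : (Fin n → Bool) × (Fin m → Bool), f s ^ 2) /
      (Fintype.card ((Fin n → Bool) × (Fin m → Bool)) : ℝ) -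
    ((∑ s : (Fin n → Bool) × (Fin m → Bool), f s) /
      (Fintype.card ((Fin n → Bool) × (Fin m → Bool)) : ℝ)) ^ 2


lemma sum_sign_single (n : ℕ) (i : Fin n) :
    ∑ s : Fin n → Bool, (if s i then (1:ℝ) else -1) = 0 := by
  have hinv : Function.Involutive (fun s : Fin n → Bool => Function.update s i (!(s i))) := by
    intro s
    funext j
    by_cases h : j = i
    · subst h; simp
    · simp [Function.update, h]
  have h := Equiv.sum_comp (hinv.toPerm _)
    (fun s : Fin n → Bool => (if s i then (1:ℝ) else -1))
  simp only [Function.Involutive.coe_toPerm] at h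
  have h2 : ∀ s : Fin n → Bool,
      (if (Function.update s i (!(s i))) i then (1:ℝ) else -1)
        = -(if s i then (1:ℝ) else -1) := by
    intro s; by_cases hs : s i <;> simp [hs]
  replace h : (∑ s : Fin n → Bool, (if (Function.update s i (!(s i))) i then (1:ℝ) else -1)) =
      ∑ s : Fin n → Bool, (if s i then (1:ℝ) else -1) := h
  rw [Finset.sum_congr rfl (fun s _ => h2 s), Finset.sum_neg_distrib] at h
  linarith


lemma sum_sign_pair (n : ℕ) (i k : Fin n) :
    ∑ s : Fin n → Bool, (if s i then (1:ℝ) else -1) * (if s k then (1:ℝ) else -1) =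
      if i = k then (2:ℝ)^n else 0 := by
  by_cases h : i = k
  · subst h
    rw [if_pos rfl]
    have h2 : ∀ s : Fin n → Bool,
        (if s i then (1:ℝ) else -1) * (if s i then (1:ℝ) else -1) = 1 := by
      intro s; by_cases hs : s i <;> simp [hs]
    rw [Finset.sum_congr rfl (fun s _ => h2 s), Finset.sum_const, Finset.card_univ]
    simp
  · rw [if_neg h]
    have hinv : Function.Involutive (fun s : Fin n → Bool => Function.update s i (!(s i))) := by
      intro s; funext j
      by_cases hj : j = i
      · subst hj; simp
      · simp [Function.update, hj]
    have heq := Equiv.sum_comp (hinv.toPerm _)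
      (fun s : Fin n → Bool => (if s i then (1:ℝ) else -1) * (if s k then (1:ℝ) else -1))
    simp only [Function.Involutive.coe_toPerm] at heq
    have h2 : ∀ s : Fin n → Bool,
        (if (Function.update s i (!(s i))) i then (1:ℝ) else -1) *
          (if (Function.update s i (!(s i))) k then (1:ℝ) else -1)
        = -((if s i then (1:ℝ) else -1) * (if s k then (1:ℝ) else -1)) := by
      intro s
      have hk : Function.update s i (!(s i)) k = s k :=
        Function.update_of_ne (fun hki => h hki.symm) _ _
      rw [hk]
      by_cases hs : s i <;> by_cases hsk : s k <;> simp [hs, hsk]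
    replace heq : (∑ s : Fin n → Bool, (if (Function.update s i (!(s i))) i then (1:ℝ) else -1) *
        (if (Function.update s i (!(s i))) k then (1:ℝ) else -1)) =
        ∑ s : Fin n → Bool, (if s i then (1:ℝ) else -1) * (if s k then (1:ℝ) else -1) := heq
    rw [Finset.sum_congr rfl (fun s _ => h2 s), Finset.sum_neg_distrib] at heq
    linarith

lemma sum_sq_sign (m : ℕ) (g : Fin m → ℝ) :
    ∑ s : Fin m → Bool, (∑ j, g j * (if s j then (1:ℝ) else -1)) ^ 2
      = 2 ^ m * ∑ j, g j ^ 2 := by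
  have expand : ∀ s : Fin m → Bool,
      (∑ j, g j * (if s j then (1:ℝ) else -1)) ^ 2
        = ∑ j, ∑ l, (g j * g l) * ((if s j then (1:ℝ) else -1) * (if s l then (1:ℝ) else -1)) := by
    intro s
    rw [sq, Finset.sum_mul_sum]
    exact Finset.sum_congr rfl fun j _ => Finset.sum_congr rfl fun l _ => by ring
  rw [Finset.sum_congr rfl (fun s _ => expand s)]
  rw [Finset.sum_comm]
  have inner : ∀ j : Fin m,
      ∑ s : Fin m → Bool, ∑ l, (g j * g l) * ((if s j then (1:ℝ) else -1) * (if s l then (1:ℝ) else -1))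
        = 2 ^ m * g j ^ 2 := by
    intro j
    rw [Finset.sum_comm]
    have : ∀ l : Fin m,
        ∑ s : Fin m → Bool, (g j * g l) * ((if s j then (1:ℝ) else -1) * (if s l then (1:ℝ) else -1))
          = (g j * g l) * (if j = l then (2:ℝ)^m else 0) := by
      intro l
      rw [← Finset.mul_sum, sum_sign_pair]
    rw [Finset.sum_congr rfl (fun l _ => this l)]
    simp only [mul_ite, mul_zero, Finset.sum_ite_eq, Finset.mem_univ, if_pos]
    simp [sq]; ring
  rw [Finset.sum_congr rfl (fun j _ => inner j), ← Finset.mul_sum]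

lemma energy_eq (n m : ℕ) (c : Fin n → Fin m → ℝ) (s : (Fin n → Bool) × (Fin m → Bool)) :
    rbmEnergyB n m c s =
      -(∑ i, (∑ j, c i j * (if s.2 j then (1:ℝ) else -1)) * (if s.1 i then (1:ℝ) else -1)) := by
  unfold rbmEnergyB
  congr 1
  refine Finset.sum_congr rfl fun i _ => ?_
  rw [Finset.sum_mul]
  exact Finset.sum_congr rfl fun j _ => by ring

lemma sum_energy (n m : ℕ) (c : Fin n → Fin m → ℝ) :
    ∑ s : (Fin n → Bool) × (Fin m → Bool), rbmEnergyB n m c s = 0 := by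
  simp_rw [energy_eq]
  rw [Fintype.sum_prod_type_right]
  have h2 : ∀ s2 : Fin m → Bool,
      ∑ s1 : Fin n → Bool,
        -(∑ i, (∑ j, c i j * (if s2 j then (1:ℝ) else -1)) * (if s1 i then (1:ℝ) else -1)) = 0 := by
    intro s2
    rw [Finset.sum_neg_distrib, Finset.sum_comm]
    simp_rw [← Finset.mul_sum, sum_sign_single, mul_zero, Finset.sum_const_zero, neg_zero]
  exact Finset.sum_congr rfl (fun s2 _ => h2 s2) |>.trans (by simp)

lemma sum_energy_sq (n m : ℕ) (c : Fin n → Fin m → ℝ) :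
    ∑ s : (Fin n → Bool) × (Fin m → Bool), rbmEnergyB n m c s ^ 2
      = 2 ^ n * 2 ^ m * ∑ i, ∑ j, c i j ^ 2 := by
  simp_rw [energy_eq, neg_sq]
  rw [Fintype.sum_prod_type_right]
  have h1 : ∀ s2 : Fin m → Bool,
      ∑ s1 : Fin n → Bool,
        (∑ i, (∑ j, c i j * (if s2 j then (1:ℝ) else -1)) * (if s1 i then (1:ℝ) else -1)) ^ 2
      = 2 ^ n * ∑ i, (∑ j, c i j * (if s2 j then (1:ℝ) else -1)) ^ 2 :=
    fun s2 => sum_sq_sign n (fun i => ∑ j, c i j * (if s2 j then (1:ℝ) else -1))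
  rw [Finset.sum_congr rfl fun s2 _ => h1 s2, ← Finset.mul_sum, Finset.sum_comm]
  simp_rw [sum_sq_sign]
  rw [← Finset.mul_sum]
  ring

lemma variance_eq (n m : ℕ) (c : Fin n → Fin m → ℝ) :
    uniformVariance n m (rbmEnergyB n m c) = ∑ i, ∑ j, c i j ^ 2 := by
  unfold uniformVariance
  rw [sum_energy, sum_energy_sq]
  have hcard : (Fintype.card ((Fin n → Bool) × (Fin m → Bool)) : ℝ) = 2 ^ n * 2 ^ m := by
    rw [Fintype.card_prod, Fintype.card_fun, Fintype.card_fun, Fintype.card_fin,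
      Fintype.card_fin, Fintype.card_bool]
    push_cast
    ring
  rw [hcard]
  have : ((2:ℝ) ^ n * 2 ^ m) ≠ 0 := by positivity
  field_simp
  ring

lemma expand_shift (n m : ℕ) (γ : ℝ) (W : Fin n → Fin m → ℝ) :
    ∑ i, ∑ j, (W i j - γ) ^ 2 =
      (∑ i, ∑ j, (W i j) ^ 2) - 2 * γ * (∑ i, ∑ j, W i j) + (n * m) * γ ^ 2 := by
  have h : ∀ i j, (W i j - γ) ^ 2 = (W i j) ^ 2 - 2 * γ * (W i j) + γ ^ 2 := by
    intro i j; ring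
  simp_rw [h, Finset.sum_add_distrib, Finset.sum_sub_distrib, ← Finset.mul_sum,
    Finset.sum_const, Finset.card_univ, Fintype.card_fin, nsmul_eq_mul]
  push_cast
  ring

/-- For a gauged RBM (the all-ones configuration is a ground state) with ground
state energy `E0 = −∑ i j, W i j`, among all mode-informed updates
`W' i j = W i j − γ` the variance of the energies over all configurations is
minimized at `γ* = −E0/(n m)`, and the maximal decrease in variance equals
`E0²/(n m)`. -/
theorem rbm_optimal_learning_rate (n m : ℕ) (hn : 0 < n) (hm : 0 < m)
    (W : Fin n → Fin m → ℝ)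
    (hgauge : ∀ s : (Fin n → Bool) × (Fin m → Bool),
      rbmEnergyB n m W (fun _ => true, fun _ => true) ≤ rbmEnergyB n m W s) :
    (∀ γ : ℝ,
      uniformVariance n m (rbmEnergyB n m
          (fun i j => W i j - (-(-(∑ i : Fin n, ∑ j : Fin m, W i j)) / (n * m)))) ≤
        uniformVariance n m (rbmEnergyB n m (fun i j => W i j - γ))) ∧
    uniformVariance n m (rbmEnergyB n m W) -
        uniformVariance n m (rbmEnergyB n m
          (fun i j => W i j - (-(-(∑ i : Fin n, ∑ j : Fin m, W i j)) / (n * m)))) =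
      (-(∑ i : Fin n, ∑ j : Fin m, W i j)) ^ 2 / (n * m) := by
  set A : ℝ := ∑ i : Fin n, ∑ j : Fin m, W i j with hA
  set B : ℝ := ∑ i : Fin n, ∑ j : Fin m, (W i j) ^ 2 with hB
  have he : (0:ℝ) < (n:ℝ) * m := by positivity
  have hne : ((n:ℝ) * m) ≠ 0 := ne_of_gt he
  have hγs : (-(-A) / ((n:ℝ) * m)) = A / ((n:ℝ) * m) := by rw [neg_neg]
  have hvar : ∀ γ : ℝ,
      uniformVariance n m (rbmEnergyB n m (fun i j => W i j - γ))
        = B - 2 * γ * A + ((n:ℝ) * m) * γ ^ 2 := fun γ => by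
    rw [variance_eq, expand_shift]
  have hvar0 : uniformVariance n m (rbmEnergyB n m W) = B := by
    have := hvar 0
    simp only [sub_zero] at this
    simpa using this
  have hkey : ((n:ℝ) * m) * (A / ((n:ℝ) * m)) = A := by field_simp
  constructor
  · intro γ
    rw [hvar, hvar]
    rw [hγs]
    have h1 : ((n:ℝ)*m) * (A / ((n:ℝ)*m))^2 = A^2 / ((n:ℝ)*m) := by field_simp
    have h2 : A / ((n:ℝ)*m) * A = A^2 / ((n:ℝ)*m) := by field_simp
    have h3 : A^2 / ((n:ℝ)*m) * ((n:ℝ)*m) = A^2 := div_mul_cancel₀ _ hne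
    nlinarith [sq_nonneg (((n:ℝ)*m)*γ - A), he, h1, h2, h3]
  · rw [hvar0, hvar, hγs]
    field_simp
    ring
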